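/- Preservation of (H) for F_∞-measurable densities: Let (Ω,F,P) be a probability space with filtrations (F_t) ⊆ (G_t) satisfying the usual assumptions, and suppose every (F_t,P)-martingale is a (G_t,P)-martingale. Let Q ~ P be such that the density dQ/dP is F_∞-measurable. Then E_P[dQ/dP | G_t] = E_P[dQ/dP | F_t] a.s. for every t, and the (H) hypothesis holds under Q: every (F_t,Q)-martingale is a (G_t,Q)-martingale. -/

import Mathlib

/-!
Under (H), conditioning an `𝓕_∞`-measurable integrable `f` on `𝓖 t` or on `𝓕 t` gives the same
result: `E[f | 𝓕 n]` is an `𝓕`-martingale, hence a `𝓖`-martingale, so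
`E[E[f | 𝓕 n] | 𝓖 t] = E[f | 𝓕 t]` for `n ≥ t`, and `E[f | 𝓕 n] → f` in `L¹` by Lévy's upward
theorem. For `Q = Y • P`, Bayes' formula turns the `Q`-martingale property of `M` in either
filtration into an identity between `P`-conditional expectations of the `𝓕_∞`-measurable products
`Y M t`, and the first step moves these identities from `𝓕 s` to `𝓖 s`.
-/

open MeasureTheory Filter Set ProbabilityTheory
open scoped NNReal ENNReal

noncomputable section

namespace Enlargement

variable {Ω : Type*} {m : MeasurableSpace Ω}

/-- A path `f : ℝ≥0 → ℝ` is càdlàg: right-continuous with left limits. -/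
def IsCadlag (f : ℝ≥0 → ℝ) : Prop :=
  (∀ t : ℝ≥0, Tendsto f (nhdsWithin t (Set.Ici t)) (nhds (f t))) ∧
  (∀ t : ℝ≥0, 0 < t → ∃ l : ℝ, Tendsto f (nhdsWithin t (Set.Iio t)) (nhds l))

/-- `M` is a local martingale w.r.t. the filtration `𝓕` under `μ`: it is adapted and there is
an increasing sequence of stopping times `τ n → ∞` a.s. localizing `M` to martingales. -/
def IsLocalMartingale (𝓕 : Filtration ℝ≥0 m) (μ : Measure Ω) (M : ℝ≥0 → Ω → ℝ) : Prop :=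
  Adapted 𝓕 M ∧
  ∃ τ : ℕ → Ω → ℝ≥0,
    (∀ n, IsStoppingTime 𝓕 (fun ω => ((τ n ω : ℝ≥0) : WithTop ℝ≥0))) ∧
    (∀ n ω, τ n ω ≤ τ (n + 1) ω) ∧
    (∀ᵐ ω ∂μ, Tendsto (fun n => τ n ω) atTop atTop) ∧
    (∀ n, Martingale (fun t ω => M (min t (τ n ω)) ω) 𝓕 μ)

/-- `X` is a semimartingale w.r.t. `𝓕` under `μ`: adapted, a.s. càdlàg, and
`X = X₀ + M + A` with `M` a càdlàg local martingale started at `0` and `A` a càdlàg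
adapted process of finite variation on compact intervals started at `0`. -/
def IsSemimartingale (𝓕 : Filtration ℝ≥0 m) (μ : Measure Ω) (X : ℝ≥0 → Ω → ℝ) : Prop :=
  Adapted 𝓕 X ∧ (∀ᵐ ω ∂μ, IsCadlag fun t => X t ω) ∧
  ∃ M A : ℝ≥0 → Ω → ℝ,
    IsLocalMartingale 𝓕 μ M ∧ (∀ ω, M 0 ω = 0) ∧ (∀ᵐ ω ∂μ, IsCadlag fun t => M t ω) ∧
    Adapted 𝓕 A ∧ (∀ ω, A 0 ω = 0) ∧ (∀ᵐ ω ∂μ, IsCadlag fun t => A t ω) ∧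
    (∀ᵐ ω ∂μ, ∀ t : ℝ≥0, BoundedVariationOn (fun s => A s ω) (Set.Icc 0 t)) ∧
    (∀ t ω, X t ω = X 0 ω + M t ω + A t ω)

/-- The filtration `𝓕` satisfies the usual hypotheses under `μ`: it is complete
(`𝓕 0` contains all `μ`-null sets) and right-continuous. -/
def UsualConditions (𝓕 : Filtration ℝ≥0 m) (μ : Measure Ω) : Prop :=
  (∀ s : Set Ω, μ s = 0 → MeasurableSet[𝓕 0] s) ∧
  (∀ t : ℝ≥0, (𝓕 t : MeasurableSpace Ω) = ⨅ (u : ℝ≥0) (_ : t < u), (𝓕 u : MeasurableSpace Ω))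

/-- `𝓖` is the initial enlargement of `𝓕` by the random variable `Z`:
`𝓖 t = ⋂_{ε>0} (𝓕 (t+ε) ⊔ σ(Z))`. -/
def InitEnlargement (𝓕 : Filtration ℝ≥0 m) (Z : Ω → ℝ) (𝓖 : Filtration ℝ≥0 m) : Prop :=
  ∀ t : ℝ≥0, (𝓖 t : MeasurableSpace Ω) =
    ⨅ (ε : ℝ≥0) (_ : 0 < ε),
      ((𝓕 (t + ε) : MeasurableSpace Ω) ⊔ MeasurableSpace.comap Z inferInstance)

/-- `𝓖` is the progressive enlargement of `𝓕` by the random time `ρ`: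
`𝓖 t = ⋂_{ε>0} (𝓕 (t+ε) ⊔ σ(ρ ∧ (t+ε)))`; it is the smallest filtration satisfying the
usual hypotheses containing `𝓕` and making `ρ` a stopping time. -/
def ProgEnlargement (𝓕 : Filtration ℝ≥0 m) (ρ : Ω → ℝ≥0∞) (𝓖 : Filtration ℝ≥0 m) : Prop :=
  ∀ t : ℝ≥0, (𝓖 t : MeasurableSpace Ω) =
    ⨅ (ε : ℝ≥0) (_ : 0 < ε),
      ((𝓕 (t + ε) : MeasurableSpace Ω) ⊔
        MeasurableSpace.comap (fun ω => min (ρ ω) ((t + ε : ℝ≥0) : ℝ≥0∞)) inferInstance)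
end Enlargement

namespace MeasureTheory

variable {Ω : Type*} {m m₀ : MeasurableSpace Ω}

def Filtration.reindex {ι κ : Type*} [Preorder ι] [Preorder κ] (𝓕 : Filtration ι m₀)
    (φ : κ → ι) (hφ : Monotone φ) : Filtration κ m₀ where
  seq k := 𝓕 (φ k)
  mono' _ _ hkl := 𝓕.mono (hφ hkl)
  le' k := 𝓕.le (φ k)

lemma Filtration.iSup_reindex {ι κ : Type*} [Preorder ι] [Preorder κ] (𝓕 : Filtration ι m₀)
    {φ : κ → ι} (hφ : Monotone φ) (hcofinal : ∀ i, ∃ k, i ≤ φ k) :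
    ⨆ k, (𝓕.reindex φ hφ k : MeasurableSpace Ω) = ⨆ i, (𝓕 i : MeasurableSpace Ω) := by
  refine le_antisymm (iSup_le fun k => le_iSup (fun i => (𝓕 i : MeasurableSpace Ω)) (φ k)) ?_
  refine iSup_le fun i => ?_
  obtain ⟨k, hik⟩ := hcofinal i
  exact le_iSup_of_le k (𝓕.mono hik)

section CondExp

variable {μ : Measure Ω}

lemma condExp_ae_eq_of_tendsto_eLpNorm {ι : Type*} {l : Filter ι} [l.NeBot]
    {f h : Ω → ℝ} {g : ι → Ω → ℝ} (hf : Integrable f μ) (hg : ∀ i, Integrable (g i) μ)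
    (hgf : Tendsto (fun i => eLpNorm (g i - f) 1 μ) l (nhds 0))
    (hgh : ∀ᶠ i in l, μ[g i|m] =ᵐ[μ] h) : μ[f|m] =ᵐ[μ] h := by
  obtain ⟨i₀, hi₀⟩ := hgh.exists
  have hh : AEStronglyMeasurable h μ := integrable_condExp.aestronglyMeasurable.congr hi₀
  have hbound : ∀ᶠ i in l, eLpNorm (μ[f|m] - h) 1 μ ≤ eLpNorm (g i - f) 1 μ := by
    filter_upwards [hgh] with i hi
    have hdiff : μ[f|m] - h =ᵐ[μ] μ[f - g i|m] := by
      filter_upwards [condExp_sub hf (hg i) m, hi] with ω hsub hgi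
      simp only [Pi.sub_apply] at hsub hgi ⊢
      rw [hsub, hgi]
    calc eLpNorm (μ[f|m] - h) 1 μ = eLpNorm (μ[f - g i|m]) 1 μ := eLpNorm_congr_ae hdiff
      _ ≤ eLpNorm (f - g i) 1 μ := eLpNorm_condExp_le_eLpNorm _ le_rfl
      _ = eLpNorm (g i - f) 1 μ := eLpNorm_sub_comm _ _ _ _
  have hzero : eLpNorm (μ[f|m] - h) 1 μ = 0 :=
    le_antisymm (ge_of_tendsto hgf hbound) zero_le
  rw [eLpNorm_eq_zero_iff (integrable_condExp.aestronglyMeasurable.sub hh) one_ne_zero] at hzero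
  exact hzero.mono fun ω hω => sub_eq_zero.1 hω

lemma condExp_ae_eq_iff_forall_setIntegral_eq (hm : m ≤ m₀) [SigmaFinite (μ.trim hm)]
    {f g : Ω → ℝ} (hf : Integrable f μ) (hg : Integrable g μ) (hgm : AEStronglyMeasurable[m] g μ) :
    μ[f|m] =ᵐ[μ] g ↔ ∀ s, MeasurableSet[m] s → ∫ x in s, f x ∂μ = ∫ x in s, g x ∂μ := by
  refine ⟨fun hfg s hs => ?_, fun hfg => ?_⟩
  · rw [← setIntegral_condExp hm hf hs]
    exact setIntegral_congr_ae (hm s hs) (hfg.mono fun _ h _ => h)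
  · exact (ae_eq_condExp_of_forall_setIntegral_eq hm hf (fun _ _ _ => hg.integrableOn)
      (fun s hs _ => (hfg s hs).symm) hgm).symm

lemma condExp_ae_eq_condExp_iff (hm : m ≤ m₀) [SigmaFinite (μ.trim hm)] {f g : Ω → ℝ}
    (hf : Integrable f μ) (hg : Integrable g μ) :
    μ[f|m] =ᵐ[μ] μ[g|m] ↔ ∀ s, MeasurableSet[m] s → ∫ x in s, f x ∂μ = ∫ x in s, g x ∂μ := by
  rw [condExp_ae_eq_iff_forall_setIntegral_eq hm hf integrable_condExp
    stronglyMeasurable_condExp.aestronglyMeasurable]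
  exact forall₂_congr fun s hs => by rw [setIntegral_condExp hm hg hs]

end CondExp

section Density

variable {μ : Measure Ω} {Y : Ω → ℝ}

lemma integrable_withDensity_ofReal_iff (hY : Measurable Y) (hY0 : 0 ≤ᵐ[μ] Y) {g : Ω → ℝ} :
    Integrable g (μ.withDensity fun ω => ENNReal.ofReal (Y ω)) ↔ Integrable (Y * g) μ := by
  rw [integrable_withDensity_iff_integrable_smul' hY.ennreal_ofReal
    (ae_of_all _ fun _ => ENNReal.ofReal_lt_top)]
  refine integrable_congr ?_
  filter_upwards [hY0] with ω hω
  simp [ENNReal.toReal_ofReal hω]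

lemma setIntegral_withDensity_ofReal (hY : Measurable Y) (hY0 : 0 ≤ᵐ[μ] Y) (g : Ω → ℝ)
    {s : Set Ω} (hs : MeasurableSet s) :
    ∫ x in s, g x ∂μ.withDensity (fun ω => ENNReal.ofReal (Y ω)) = ∫ x in s, (Y * g) x ∂μ := by
  rw [setIntegral_withDensity_eq_setIntegral_toReal_smul hY.ennreal_ofReal
    (ae_of_all _ fun _ => ENNReal.ofReal_lt_top) g hs]
  refine setIntegral_congr_ae hs ?_
  filter_upwards [hY0] with ω hω _
  simp [ENNReal.toReal_ofReal hω]

/-- Abstract Bayes formula. -/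
lemma condExp_withDensity_ae_eq_iff [IsFiniteMeasure μ] {ν : Measure Ω} [IsFiniteMeasure ν]
    (hY : Measurable Y) (hY0 : 0 ≤ᵐ[μ] Y) (hν : ν = μ.withDensity fun ω => ENNReal.ofReal (Y ω))
    (hm : m ≤ m₀) {X X' : Ω → ℝ} (hX : Integrable X ν) (hX' : Integrable X' ν)
    (hX'm : AEStronglyMeasurable[m] X' ν) :
    ν[X|m] =ᵐ[ν] X' ↔ μ[Y * X|m] =ᵐ[μ] μ[Y * X'|m] := by
  subst hν
  rw [condExp_ae_eq_iff_forall_setIntegral_eq hm hX hX' hX'm,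
    condExp_ae_eq_condExp_iff hm ((integrable_withDensity_ofReal_iff hY hY0).1 hX)
      ((integrable_withDensity_ofReal_iff hY hY0).1 hX')]
  exact forall₂_congr fun s hs => by
    rw [setIntegral_withDensity_ofReal hY hY0 X (hm s hs),
      setIntegral_withDensity_ofReal hY hY0 X' (hm s hs)]

end Density

end MeasureTheory

namespace Enlargement

variable {Ω : Type*} {m : MeasurableSpace Ω}

/-- Hypothesis (H): `𝓕` is immersed in `𝓖` under `μ`. -/
def IsImmersed {ι : Type*} [Preorder ι] (𝓕 𝓖 : Filtration ι m) (μ : Measure Ω) : Prop :=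
  ∀ M : ι → Ω → ℝ, Martingale M 𝓕 μ → Martingale M 𝓖 μ

section Immersion

variable {μ : Measure Ω} [IsFiniteMeasure μ] {𝓕 𝓖 : Filtration ℝ≥0 m}

lemma IsImmersed.condExp_ae_eq (hH : IsImmersed 𝓕 𝓖 μ) {f : Ω → ℝ} (hf : Integrable f μ)
    (hfm : StronglyMeasurable[⨆ s, (𝓕 s : MeasurableSpace Ω)] f) (t : ℝ≥0) :
    μ[f|𝓖 t] =ᵐ[μ] μ[f|𝓕 t] := by
  have hcofinal : ∀ s : ℝ≥0, ∃ n : ℕ, s ≤ n := fun s => ⟨⌈s⌉₊, Nat.le_ceil s⟩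
  set 𝓕ℕ := 𝓕.reindex (fun n : ℕ => (n : ℝ≥0)) Nat.mono_cast
  have hlevy : Tendsto (fun n => eLpNorm (μ[f|𝓕ℕ n] - f) 1 μ) atTop (nhds 0) :=
    hf.tendsto_eLpNorm_condExp (by rwa [𝓕.iSup_reindex Nat.mono_cast hcofinal])
  refine condExp_ae_eq_of_tendsto_eLpNorm hf (fun _ => integrable_condExp) hlevy ?_
  filter_upwards [eventually_ge_atTop ⌈t⌉₊] with n hn
  exact (hH _ (martingale_condExp f 𝓕 μ)).2 t n ((Nat.le_ceil t).trans (by exact_mod_cast hn))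

lemma IsImmersed.withDensity (hH : IsImmersed 𝓕 𝓖 μ) (hle : ∀ t, 𝓕 t ≤ 𝓖 t) {Y : Ω → ℝ}
    (hYm : Measurable[⨆ s, (𝓕 s : MeasurableSpace Ω)] Y) (hY0 : 0 ≤ᵐ[μ] Y)
    {ν : Measure Ω} [IsFiniteMeasure ν] (hν : ν = μ.withDensity fun ω => ENNReal.ofReal (Y ω)) :
    IsImmersed 𝓕 𝓖 ν := by
  intro M hM
  have hY : Measurable Y := hYm.mono (iSup_le 𝓕.le) le_rfl
  have hYM : ∀ u, Integrable (Y * M u) μ := fun u =>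
    (integrable_withDensity_ofReal_iff hY hY0).1 (hν ▸ hM.integrable u)
  have hYMm : ∀ u, StronglyMeasurable[⨆ s, (𝓕 s : MeasurableSpace Ω)] (Y * M u) := fun u =>
    hYm.stronglyMeasurable.mul ((hM.stronglyAdapted u).mono (le_iSup_of_le u le_rfl))
  refine ⟨fun t => (hM.stronglyAdapted t).mono (hle t), fun s t hst => ?_⟩
  have h𝓕 : μ[Y * M t|𝓕 s] =ᵐ[μ] μ[Y * M s|𝓕 s] :=
    (condExp_withDensity_ae_eq_iff hY hY0 hν (𝓕.le s) (hM.integrable t) (hM.integrable s)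
      (hM.stronglyAdapted s).aestronglyMeasurable).1 (hM.2 s t hst)
  rw [condExp_withDensity_ae_eq_iff hY hY0 hν (𝓖.le s) (hM.integrable t) (hM.integrable s)
    ((hM.stronglyAdapted s).mono (hle s)).aestronglyMeasurable]
  exact (hH.condExp_ae_eq (hYM t) (hYMm t) s).trans
    (h𝓕.trans (hH.condExp_ae_eq (hYM s) (hYMm s) s).symm)

end Immersion

theorem H_preserved_Finfty_density_general {μ ν : Measure Ω}
    [IsProbabilityMeasure μ] [IsProbabilityMeasure ν]
    (𝓕 𝓖 : Filtration ℝ≥0 m)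
    (hle : ∀ t : ℝ≥0, (𝓕 t : MeasurableSpace Ω) ≤ 𝓖 t)
    (hH : ∀ M : ℝ≥0 → Ω → ℝ, Martingale M 𝓕 μ → Martingale M 𝓖 μ)
    (Y : Ω → ℝ) (hYpos : ∀ᵐ ω ∂μ, 0 < Y ω)
    (hYmeas : Measurable[⨆ s : ℝ≥0, (𝓕 s : MeasurableSpace Ω)] Y)
    (hYdens : ν = μ.withDensity (fun ω => ENNReal.ofReal (Y ω))) :
    (∀ t : ℝ≥0, μ[Y | 𝓖 t] =ᵐ[μ] μ[Y | 𝓕 t]) ∧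
    (∀ M : ℝ≥0 → Ω → ℝ, Martingale M 𝓕 ν → Martingale M 𝓖 ν) := by
  have hY0 : 0 ≤ᵐ[μ] Y := hYpos.mono fun _ hω => hω.le
  have hYint : Integrable Y μ := by
    have hone : Integrable (fun _ => (1 : ℝ)) ν := integrable_const 1
    rw [hYdens, integrable_withDensity_ofReal_iff (hYmeas.mono (iSup_le 𝓕.le) le_rfl) hY0] at hone
    simpa only [Pi.mul_def, mul_one] using hone
  exact ⟨IsImmersed.condExp_ae_eq hH hYint hYmeas.stronglyMeasurable,
    IsImmersed.withDensity hH hle hYmeas hY0 hYdens⟩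

/-- **Preservation of (H) for `𝓕_∞`-measurable densities.** Suppose (H) holds under `P`
and `Q ∼ P` with `𝓕_∞`-measurable density `Y = dQ/dP`. Then `E_P[Y | 𝓖 t] = E_P[Y | 𝓕 t]`
a.s. for every `t`, and (H) holds under `Q`. -/
theorem H_preserved_Finfty_density {μ ν : Measure Ω}
    [IsProbabilityMeasure μ] [IsProbabilityMeasure ν]
    (𝓕 𝓖 : Filtration ℝ≥0 m)
    (h𝓕 : UsualConditions 𝓕 μ) (h𝓖 : UsualConditions 𝓖 μ)
    (hle : ∀ t : ℝ≥0, (𝓕 t : MeasurableSpace Ω) ≤ 𝓖 t)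
    (hH : ∀ M : ℝ≥0 → Ω → ℝ, Martingale M 𝓕 μ → Martingale M 𝓖 μ)
    (hequiv : μ ≪ ν ∧ ν ≪ μ)
    (Y : Ω → ℝ) (hYpos : ∀ᵐ ω ∂μ, 0 < Y ω)
    (hYmeas : Measurable[⨆ s : ℝ≥0, (𝓕 s : MeasurableSpace Ω)] Y)
    (hYdens : ν = μ.withDensity (fun ω => ENNReal.ofReal (Y ω))) :
    (∀ t : ℝ≥0, μ[Y | 𝓖 t] =ᵐ[μ] μ[Y | 𝓕 t]) ∧
    (∀ M : ℝ≥0 → Ω → ℝ, Martingale M 𝓕 ν → Martingale M 𝓖 ν) :=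
  H_preserved_Finfty_density_general 𝓕 𝓖 hle hH Y hYpos hYmeas hYdens

end Enlargement
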